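/- arXiv:1412.3669 — 8 statements merged into one kernel-verified Lean document; each statement's English description precedes it below -/
import Mathlib

section
/- Let H be an n×n Hermitian matrix with all diagonal entries zero and each off-diagonal entry in {0, 1, i, -i}, such that each row has exactly Δ nonzero entries. Then the sum of the absolute values of the eigenvalues of H equals n·√Δ if and only if H² = Δ·I. -/
open Matrix BigOperators

/-- For a Hermitian matrix `H` with zero diagonal, off-diagonal entries in
`{0, 1, i, -i}`, and exactly `Δ` nonzero entries in each row, the Hermitian energy
equals `n * √Δ` if and only if `H ^ 2 = Δ • I`. -/
theorem hermitian_energy_eq_iff_sq {n Δ : ℕ}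
    (H : Matrix (Fin n) (Fin n) ℂ) (hH : H.IsHermitian)
    (hdiag : ∀ u, H u u = 0)
    (hent : ∀ u v, u ≠ v → H u v ∈ ({0, 1, Complex.I, -Complex.I} : Set ℂ))
    (hrow : ∀ u, (Finset.univ.filter (fun v => H u v ≠ 0)).card = Δ) :
    ∑ i, |hH.eigenvalues i| = n * Real.sqrt Δ ↔ H ^ 2 = (Δ : ℂ) • (1 : Matrix (Fin n) (Fin n) ℂ) := by
  -- entries have unit norm when nonzero
  have habs : ∀ u v, H u v ≠ 0 → Complex.normSq (H u v) = 1 := by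
    intro u v h
    rcases eq_or_ne u v with rfl | huv
    · exact absurd (hdiag u) h
    · rcases hent u v huv with h0 | h1 | hI | hI' <;> simp_all
  -- diagonal of H^2
  have hdiagH2 : ∀ u, (H ^ 2) u u = (Δ : ℂ) := by
    intro u
    have : (H ^ 2) u u = ∑ v, H u v * H v u := by
      rw [pow_two]; rfl
    rw [this]
    have : ∀ v, H u v * H v u = (Complex.normSq (H u v) : ℂ) := by
      intro v
      have : H v u = star (H u v) := by
        conv_lhs => rw [← hH]
        rfl
      rw [this, Complex.star_def, Complex.mul_conj]
    simp_rw [this]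
    rw [← Complex.ofReal_sum]
    norm_cast
    rw [← Finset.sum_filter_add_sum_filter_not Finset.univ (fun v => H u v ≠ 0)]
    have h1 : ∑ v ∈ Finset.univ.filter (fun v => H u v ≠ 0), Complex.normSq (H u v) = Δ := by
      rw [Finset.sum_congr rfl (fun v hv => habs u v (Finset.mem_filter.mp hv).2)]
      simp [hrow u]
    have h2 : ∑ v ∈ Finset.univ.filter (fun v => ¬ H u v ≠ 0), Complex.normSq (H u v) = 0 := by
      apply Finset.sum_eq_zero; intro v hv
      simp at hv; simp [hv]
    rw [h1, h2, add_zero]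
  have htrC : (H ^ 2).trace = (n : ℂ) * Δ := by
    rw [Matrix.trace]
    simp only [Matrix.diag_apply, hdiagH2, Finset.sum_const, Finset.card_univ,
      Fintype.card_fin, nsmul_eq_mul]
  -- spectral theorem setup
  set U : Matrix (Fin n) (Fin n) ℂ := (hH.eigenvectorUnitary : Matrix (Fin n) (Fin n) ℂ) with hUdef
  set D : Matrix (Fin n) (Fin n) ℂ := diagonal (Complex.ofReal ∘ hH.eigenvalues) with hDdef
  have hU1 : U * star U = 1 := (Matrix.mem_unitaryGroup_iff).mp hH.eigenvectorUnitary.2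
  have hU2 : star U * U = 1 := (Matrix.mem_unitaryGroup_iff').mp hH.eigenvectorUnitary.2
  have hspec : H = U * D * star U := hH.spectral_theorem
  have hH2 : H ^ 2 = U * (D * D) * star U := by
    rw [pow_two, hspec]
    calc U * D * star U * (U * D * star U) = U * D * (star U * U) * D * star U := by
          noncomm_ring
      _ = U * (D * D) * star U := by rw [hU2]; noncomm_ring
  have htr2 : (H ^ 2).trace = ∑ i, ((hH.eigenvalues i : ℂ))^2 := by
    rw [hH2, Matrix.trace_mul_cycle, ← mul_assoc, hU2, one_mul]
    simp [hDdef, Matrix.diagonal_mul_diagonal, Matrix.trace_diagonal, pow_two]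
  have htr : ∑ i, (hH.eigenvalues i)^2 = (n : ℝ) * Δ := by
    exact_mod_cast htr2 ▸ htrC
  -- key equivalence: all eigenvalues square to Δ iff H^2 = Δ • 1
  have hDD : D * D = diagonal (fun i => ((hH.eigenvalues i : ℂ))^2) := by
    rw [hDdef, Matrix.diagonal_mul_diagonal]
    congr! 1 with i
    simp [pow_two]
  have hkey : (∀ i, (hH.eigenvalues i)^2 = (Δ : ℝ)) ↔
      H ^ 2 = (Δ : ℂ) • (1 : Matrix (Fin n) (Fin n) ℂ) := by
    constructor
    · intro hall
      have : D * D = (Δ : ℂ) • (1 : Matrix (Fin n) (Fin n) ℂ) := by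
        have hfun : (fun i => ((hH.eigenvalues i : ℂ))^2) = (fun _ => (Δ : ℂ)) := by
          funext i
          exact_mod_cast hall i
        rw [hDD, hfun, Matrix.smul_one_eq_diagonal]
      rw [hH2, this, Matrix.mul_smul, Matrix.smul_mul, mul_one, hU1]
    · intro hsq
      have hDDeq : D * D = (Δ : ℂ) • (1 : Matrix (Fin n) (Fin n) ℂ) := by
        have : star U * (H ^ 2) * U = D * D := by
          rw [hH2]
          calc star U * (U * (D * D) * star U) * U
              = (star U * U) * (D * D) * (star U * U) := by noncomm_ring
            _ = D * D := by rw [hU2]; noncomm_ring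
        rw [hsq] at this
        rw [← this, Matrix.mul_smul, Matrix.smul_mul, mul_one, hU2]
      intro i
      have := congrFun (congrFun (hDD ▸ hDDeq) i) i
      simp [Matrix.smul_one_eq_diagonal] at this
      exact_mod_cast this
  rw [← hkey]
  constructor
  · intro hsum i
    set s : ℝ := Real.sqrt Δ with hs
    have hs2 : s ^ 2 = Δ := Real.sq_sqrt (by positivity)
    have hz : ∑ i, (|hH.eigenvalues i| - s)^2 = 0 := by
      have expand : ∀ i, (|hH.eigenvalues i| - s)^2 =
          (hH.eigenvalues i)^2 - 2 * s * |hH.eigenvalues i| + s^2 := by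
        intro i
        rw [sub_sq, sq_abs]
        ring
      rw [Finset.sum_congr rfl (fun i _ => expand i), Finset.sum_add_distrib,
        Finset.sum_sub_distrib, htr, ← Finset.mul_sum, hsum]
      simp only [Finset.sum_const, Finset.card_univ, Fintype.card_fin, nsmul_eq_mul]
      linear_combination (-(n : ℝ)) * hs2
    have hzero := (Finset.sum_eq_zero_iff_of_nonneg
      (fun i _ => sq_nonneg (|hH.eigenvalues i| - s))).mp hz i (Finset.mem_univ i)
    have habs_eq : |hH.eigenvalues i| = s := by
      have := pow_eq_zero_iff (n := 2) (by norm_num) |>.mp hzero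
      linarith [sub_eq_zero.mp this]
    calc (hH.eigenvalues i)^2 = |hH.eigenvalues i|^2 := (sq_abs _).symm
      _ = s^2 := by rw [habs_eq]
      _ = Δ := hs2
  · intro hall
    have : ∀ i, |hH.eigenvalues i| = Real.sqrt Δ := by
      intro i
      rw [← Real.sqrt_sq_eq_abs, hall i]
    rw [Finset.sum_congr rfl (fun i _ => this i)]
    simp [mul_comm]
end

section
/- Let H be the Hermitian-adjacency matrix of a k-regular mixed graph G^φ on n vertices with H² = k·I. Then for any pair of distinct vertices u and v of the underlying graph G, the number of common neighbors |N(u) ∩ N(v)| is even. -/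
/-!
Off the diagonal, `H ^ 2 = k • 1` says `∑_w H u w * H w v = 0`. Only common neighbours `w` of
`u` and `v` contribute, and each of their terms is a product of two entries in `{1, i, -i}`,
hence one of `±1, ±i`. For such `z` the integer `re z + im z` is `±1`, so taking `re + im` of
the vanishing sum gives a vanishing sum of `±1`'s, whose number of terms is even.
-/

open Matrix Complex

theorem Finset.even_card_of_sum_eq_zero_of_forall_eq_one_or_neg_one {ι : Type*}
    {s : Finset ι} {a : ι → ℝ} (ha : ∀ i ∈ s, a i = 1 ∨ a i = -1) (hsum : ∑ i ∈ s, a i = 0) :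
    Even s.card := by
  classical
  have hneg : ∀ i ∈ s.filter (a · ≠ 1), a i = -1 := fun i hi => by
    obtain ⟨his, hi1⟩ := Finset.mem_filter.mp hi
    exact (ha i his).resolve_left hi1
  have hbalance : ((s.filter (a · = 1)).card : ℝ) - (s.filter (a · ≠ 1)).card = 0 := by
    rw [← hsum, ← Finset.sum_filter_add_sum_filter_not s (a · = 1),
      Finset.sum_congr rfl (fun i hi => (Finset.mem_filter.mp hi).2), Finset.sum_congr rfl hneg]
    simp [sub_eq_add_neg]
  have hcard : (s.filter (a · = 1)).card = (s.filter (a · ≠ 1)).card := by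
    exact_mod_cast sub_eq_zero.mp hbalance
  rw [← Finset.card_filter_add_card_filter_not (a · = 1), hcard]
  exact ⟨_, rfl⟩

lemma mul_mem_of_mem_one_I_neg_I {a b : ℂ} (ha : a ∈ ({1, I, -I} : Set ℂ))
    (hb : b ∈ ({1, I, -I} : Set ℂ)) : a * b ∈ ({1, -1, I, -I} : Set ℂ) := by
  simp only [Set.mem_insert_iff, Set.mem_singleton_iff] at ha hb ⊢
  rcases ha with rfl | rfl | rfl <;> rcases hb with rfl | rfl | rfl <;> simp

lemma re_add_im_eq_one_or_neg_one {z : ℂ} (hz : z ∈ ({1, -1, I, -I} : Set ℂ)) :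
    z.re + z.im = 1 ∨ z.re + z.im = -1 := by
  simp only [Set.mem_insert_iff, Set.mem_singleton_iff] at hz
  rcases hz with rfl | rfl | rfl | rfl <;> norm_num

theorem Finset.even_card_of_sum_eq_zero_of_forall_mem_fourth_roots {ι : Type*} {s : Finset ι}
    {f : ι → ℂ} (hf : ∀ i ∈ s, f i ∈ ({1, -1, I, -I} : Set ℂ)) (hsum : ∑ i ∈ s, f i = 0) :
    Even s.card := by
  refine Finset.even_card_of_sum_eq_zero_of_forall_eq_one_or_neg_one
    (a := fun i => (f i).re + (f i).im) (fun i hi => re_add_im_eq_one_or_neg_one (hf i hi)) ?_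
  rw [Finset.sum_add_distrib, ← Complex.re_sum, ← Complex.im_sum, hsum]
  simp

lemma SimpleGraph.mul_apply_eq_sum_commonNeighbors {V R : Type*} [Fintype V] [DecidableEq V]
    [NonUnitalNonAssocSemiring R] (G : SimpleGraph V) [DecidableRel G.Adj] {H : Matrix V V R}
    (hnadj : ∀ u v, ¬ G.Adj u v → H u v = 0) (u v : V) :
    (H * H) u v = ∑ w ∈ G.neighborFinset u ∩ G.neighborFinset v, H u w * H w v := by
  rw [Matrix.mul_apply]
  refine (Finset.sum_subset (Finset.subset_univ _) fun w _ hw => ?_).symm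
  simp only [Finset.mem_inter, SimpleGraph.mem_neighborFinset, not_and] at hw
  by_cases huw : G.Adj u w
  · rw [hnadj w v fun hwv => hw huw hwv.symm, mul_zero]
  · rw [hnadj u w huw, zero_mul]

theorem even_common_neighbors_general {n k : ℕ} (G : SimpleGraph (Fin n)) [DecidableRel G.Adj]
    (H : Matrix (Fin n) (Fin n) ℂ)
    (hadj : ∀ u v, G.Adj u v → H u v ∈ ({1, Complex.I, -Complex.I} : Set ℂ))
    (hnadj : ∀ u v, ¬ G.Adj u v → H u v = 0)
    (hsq : H ^ 2 = (k : ℂ) • (1 : Matrix (Fin n) (Fin n) ℂ))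
    (u v : Fin n) (huv : u ≠ v) :
    Even ((G.neighborFinset u ∩ G.neighborFinset v).card) := by
  have hoff : (H * H) u v = 0 := by
    rw [← sq, hsq, Matrix.smul_apply, one_apply_ne huv, smul_zero]
  rw [G.mul_apply_eq_sum_commonNeighbors hnadj] at hoff
  refine Finset.even_card_of_sum_eq_zero_of_forall_mem_fourth_roots (fun w hw => ?_) hoff
  simp only [Finset.mem_inter, SimpleGraph.mem_neighborFinset] at hw
  exact mul_mem_of_mem_one_I_neg_I (hadj u w hw.1) (hadj w v hw.2.symm)

/-- If `H` is the Hermitian-adjacency matrix of a `k`-regular mixed graph on `n`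
vertices with `H ^ 2 = k • I`, then any two distinct vertices have an even number of
common neighbors. -/
theorem even_common_neighbors {n k : ℕ} (G : SimpleGraph (Fin n)) [DecidableRel G.Adj]
    (H : Matrix (Fin n) (Fin n) ℂ) (hH : H.IsHermitian)
    (hadj : ∀ u v, G.Adj u v → H u v ∈ ({1, Complex.I, -Complex.I} : Set ℂ))
    (hnadj : ∀ u v, ¬ G.Adj u v → H u v = 0)
    (hreg : ∀ v, G.degree v = k)
    (hsq : H ^ 2 = (k : ℂ) • (1 : Matrix (Fin n) (Fin n) ℂ))
    (u v : Fin n) (huv : u ≠ v) :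
    Even ((G.neighborFinset u ∩ G.neighborFinset v).card) :=
  even_common_neighbors_general G H hadj hnadj hsq u v huv
end

section
/- Define recursively H₁ = [[0, i], [-i, 0]] and H_k = [[H_{k-1}, iI], [-iI, -H_{k-1}]] as a 2^k × 2^k block matrix, where I is the identity of size 2^{k-1}. Then H_k² = k·I_{2^k} for every positive integer k. -/
open Matrix

/-- The equivalence `Fin (2^k) ⊕ Fin (2^k) ≃ Fin (2^(k+1))`. -/
def cubeEquiv (k : ℕ) : Fin (2 ^ k) ⊕ Fin (2 ^ k) ≃ Fin (2 ^ (k + 1)) :=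
  finSumFinEquiv.trans (finCongr (by rw [pow_succ]; omega))

/-- The Hermitian-adjacency matrix `H_k` of the canonical optimum orientation `φ₀` of the
hypercube `Q_k`, defined recursively: `H₀` is the `1×1` zero matrix (so that
`H₁ = [[0, i], [-i, 0]]`), and `H_{k+1} = [[H_k, iI], [-iI, -H_k]]`. -/
noncomputable def Hcube : (k : ℕ) → Matrix (Fin (2 ^ k)) (Fin (2 ^ k)) ℂ
  | 0 => 0
  | (k + 1) =>
      Matrix.reindex (cubeEquiv k) (cubeEquiv k)
        (Matrix.fromBlocks (Hcube k) (Complex.I • 1) (-(Complex.I • 1)) (-(Hcube k)))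

lemma Hcube_sq_all (k : ℕ) :
    (Hcube k) ^ 2 = (k : ℂ) • (1 : Matrix (Fin (2 ^ k)) (Fin (2 ^ k)) ℂ) := by
  induction k with
  | zero => simp [Hcube]
  | succ k ih =>
    have h : (Hcube (k+1)) = Matrix.reindex (cubeEquiv k) (cubeEquiv k)
        (Matrix.fromBlocks (Hcube k) (Complex.I • 1) (-(Complex.I • 1)) (-(Hcube k))) := rfl
    rw [h, pow_two]
    rw [Matrix.reindex_apply, Matrix.submatrix_mul_equiv]
    rw [Matrix.fromBlocks_multiply]
    have e1 : Hcube k * Hcube k + (Complex.I • 1) * -(Complex.I • (1 : Matrix (Fin (2^k)) (Fin (2^k)) ℂ))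
        = ((k:ℂ)+1) • 1 := by
      rw [← pow_two, ih]
      rw [add_smul, one_smul]
      congr 1
      simp [smul_smul, Complex.I_mul_I]
    have e2 : Hcube k * (Complex.I • 1) + (Complex.I • 1) * -(Hcube k) = (0 : Matrix (Fin (2^k)) (Fin (2^k)) ℂ) := by
      simp [Matrix.mul_smul, Matrix.smul_mul]
    have e3 : -(Complex.I • 1) * Hcube k + -(Hcube k) * -(Complex.I • (1:Matrix (Fin (2^k)) (Fin (2^k)) ℂ)) = 0 := by
      simp [Matrix.mul_smul, Matrix.smul_mul]
    have e4 : -(Complex.I • 1) * (Complex.I • (1:Matrix (Fin (2^k)) (Fin (2^k)) ℂ)) + -(Hcube k) * -(Hcube k)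
        = ((k:ℂ)+1) • 1 := by
      rw [neg_mul_neg, ← pow_two, ih, add_smul, one_smul]
      rw [add_comm]
      congr 1
      simp [smul_smul, Complex.I_mul_I]
    rw [e1, e2, e3, e4]
    have : Matrix.fromBlocks (((k:ℂ)+1) • 1) 0 0 (((k:ℂ)+1) • (1 : Matrix (Fin (2^k)) (Fin (2^k)) ℂ))
        = ((k:ℂ)+1) • (1 : Matrix (Fin (2^k) ⊕ Fin (2^k)) (Fin (2^k) ⊕ Fin (2^k)) ℂ) := by
      rw [← Matrix.fromBlocks_one, Matrix.fromBlocks_smul, smul_zero]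
    rw [this]
    ext i j
    simp [Matrix.submatrix_apply, Matrix.one_apply, Equiv.apply_eq_iff_eq,
      EmbeddingLike.apply_eq_iff_eq]

/-- `H_k ^ 2 = k • I` for every positive integer `k`. -/
theorem Hcube_sq (k : ℕ) (hk : 1 ≤ k) :
    (Hcube k) ^ 2 = (k : ℂ) • (1 : Matrix (Fin (2 ^ k)) (Fin (2 ^ k)) ℂ) :=
  Hcube_sq_all k
end

section
/- Let H_k be defined recursively by H₁ = [[0, i], [-i, 0]] and H_k = [[H_{k-1}, iI], [-iI, -H_{k-1}]]. Then the oriented hypercube Q_k^{φ₀} with Hermitian-adjacency matrix H_k has Hermitian energy 2^k·√k, i.e., the sum of the absolute values of the eigenvalues of H_k equals 2^k·√k. -/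
open Matrix BigOperators

lemma Hcube_sq_s9 (k : ℕ) : Hcube k * Hcube k = (k : ℂ) • 1 := by
  induction k with
  | zero => simp [Hcube]
  | succ k ih =>
    push_cast
    simp only [Hcube, reindex_apply]
    rw [submatrix_mul_equiv, fromBlocks_multiply]
    have key : fromBlocks (Hcube k * Hcube k + Complex.I • 1 * -(Complex.I • 1))
        (Hcube k * (Complex.I • 1) + Complex.I • 1 * -Hcube k)
        (-(Complex.I • 1) * Hcube k + -Hcube k * -(Complex.I • 1))
        (-(Complex.I • 1) * (Complex.I • 1) + -Hcube k * -Hcube k)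
        = ((k : ℂ) + 1) • (1 : Matrix (Fin (2 ^ k) ⊕ Fin (2 ^ k)) _ ℂ) := by
      rw [← fromBlocks_one, fromBlocks_smul]
      congr 1 <;>
        simp [ih, Matrix.smul_mul, Matrix.mul_smul, smul_smul, Complex.I_mul_I, add_smul,
          add_comm]
    rw [key]
    ext a b
    simp [submatrix, Matrix.one_apply, Equiv.symm_apply_eq]

/-- The oriented hypercube `Q_k^{φ₀}` has optimum Hermitian energy: the sum of absolute
values of the eigenvalues of `H_k` equals `2^k * √k`. -/
theorem Hcube_energy (k : ℕ) (hk : 1 ≤ k) (h : (Hcube k).IsHermitian) :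
    ∑ i, |h.eigenvalues i| = (2 : ℝ) ^ k * Real.sqrt k := by
  have habs : ∀ i, |h.eigenvalues i| = Real.sqrt k := by
    intro i
    have hv := h.mulVec_eigenvectorBasis i
    set v := ⇑(h.eigenvectorBasis i) with hvdef
    have hv0 : v ≠ 0 := by
      have := h.eigenvectorBasis.orthonormal.ne_zero i
      intro hc
      exact this (by ext j; exact congrFun hc j)
    set lam : ℝ := h.eigenvalues i with hldef
    have hv' : Hcube k *ᵥ v = (lam : ℂ) • v := by
      rw [hv, RCLike.real_smul_eq_coe_smul (K := ℂ)]
      norm_cast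
    have h2 : ((lam : ℂ) ^ 2) • v = (k : ℂ) • v := by
      calc ((lam : ℂ) ^ 2) • v = (lam : ℂ) • ((lam : ℂ) • v) := by rw [smul_smul]; ring_nf
        _ = (lam : ℂ) • (Hcube k *ᵥ v) := by rw [hv']
        _ = Hcube k *ᵥ ((lam : ℂ) • v) := by rw [mulVec_smul]
        _ = Hcube k *ᵥ (Hcube k *ᵥ v) := by rw [hv']
        _ = (Hcube k * Hcube k) *ᵥ v := by rw [mulVec_mulVec]
        _ = (k : ℂ) • v := by rw [Hcube_sq_s9, smul_mulVec, one_mulVec]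
    have heq : ((lam : ℂ) ^ 2) = (k : ℂ) := by
      by_contra hne
      apply hv0
      have := sub_eq_zero.mpr h2
      rw [← sub_smul] at this
      exact (smul_eq_zero.mp this).resolve_left (sub_ne_zero.mpr hne)
    have hreal : lam ^ 2 = (k : ℝ) := by exact_mod_cast heq
    rw [← Real.sqrt_sq_eq_abs, hreal]
  rw [Finset.sum_congr rfl fun i _ => habs i, Finset.sum_const, Finset.card_univ,
    Fintype.card_fin, nsmul_eq_mul]
  push_cast
  ring
end

section
/- If H is the Hermitian-adjacency matrix of a mixed graph on 4 vertices with underlying graph K₄ satisfying H² = 3I, then the mixed graph is either an orientation of K₄ or has a vertex incident to three undirected edges. -/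
open Matrix


set_option maxHeartbeats 2000000 in
lemma aux729 (a b c d e f : ℂ)
    (ha : a = 1 ∨ a = Complex.I ∨ a = -Complex.I)
    (hb : b = 1 ∨ b = Complex.I ∨ b = -Complex.I)
    (hc : c = 1 ∨ c = Complex.I ∨ c = -Complex.I)
    (hd : d = 1 ∨ d = Complex.I ∨ d = -Complex.I)
    (he : e = 1 ∨ e = Complex.I ∨ e = -Complex.I)
    (hf : f = 1 ∨ f = Complex.I ∨ f = -Complex.I)
    (h1 : b * star d + c * star e = 0)
    (h2 : a * d + c * star f = 0)
    (h3 : a * e + b * f = 0)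
    (hone : a = 1 ∨ b = 1 ∨ c = 1 ∨ d = 1 ∨ e = 1 ∨ f = 1) :
    (a = 1 ∧ b = 1 ∧ c = 1) ∨ (a = 1 ∧ d = 1 ∧ e = 1) ∨
    (b = 1 ∧ d = 1 ∧ f = 1) ∨ (c = 1 ∧ e = 1 ∧ f = 1) := by
  rcases ha with rfl|rfl|rfl <;> rcases hb with rfl|rfl|rfl <;>
  rcases hc with rfl|rfl|rfl <;> rcases hd with rfl|rfl|rfl <;>
  rcases he with rfl|rfl|rfl <;> rcases hf with rfl|rfl|rfl <;>
  norm_num [Complex.star_def, Complex.ext_iff] at *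

/-- Let `H` be the Hermitian-adjacency matrix of a mixed graph on 4 vertices with
underlying graph `K₄` (zero diagonal, all off-diagonal entries in `{1, i, -i}`) with
`H² = 3I`. If the mixed graph is not an oriented graph (some off-diagonal entry equals
`1`), then there is a vertex all three of whose incident edges are undirected. -/
theorem K4_optimum_structure
    (H : Matrix (Fin 4) (Fin 4) ℂ) (hH : H.IsHermitian)
    (hdiag : ∀ u, H u u = 0)
    (hent : ∀ u v, u ≠ v → H u v ∈ ({1, Complex.I, -Complex.I} : Set ℂ))
    (hsq : H ^ 2 = (3 : ℂ) • (1 : Matrix (Fin 4) (Fin 4) ℂ))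
    (hnotoriented : ∃ u v, u ≠ v ∧ H u v = 1) :
    ∃ u, ∀ v, v ≠ u → H u v = 1 := by
  have hsym : ∀ u v, H u v = star (H v u) := fun u v => (hH.apply u v).symm
  have key : ∀ u v : Fin 4, u ≠ v → (H ^ 2) u v = 0 := by
    intro u v huv
    rw [hsq]
    simp [Matrix.smul_apply, Matrix.one_apply, huv]
  have expand : ∀ u v : Fin 4, (H ^ 2) u v =
      H u 0 * H 0 v + H u 1 * H 1 v + H u 2 * H 2 v + H u 3 * H 3 v := by
    intro u v
    rw [pow_two, Matrix.mul_apply, Fin.sum_univ_four]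
  have h1 : H 0 2 * star (H 1 2) + H 0 3 * star (H 1 3) = 0 := by
    have := key 0 1 (by decide)
    rw [expand] at this
    rw [hsym 2 1, hsym 3 1] at this
    simpa [hdiag] using this
  have h2 : H 0 1 * H 1 2 + H 0 3 * star (H 2 3) = 0 := by
    have := key 0 2 (by decide)
    rw [expand] at this
    rw [hsym 3 2] at this
    simpa [hdiag] using this
  have h3 : H 0 1 * H 1 3 + H 0 2 * H 2 3 = 0 := by
    have := key 0 3 (by decide)
    rw [expand] at this
    simpa [hdiag] using this
  have mem : ∀ u v : Fin 4, u ≠ v →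
      H u v = 1 ∨ H u v = Complex.I ∨ H u v = -Complex.I := by
    intro u v huv
    simpa [Set.mem_insert_iff] using hent u v huv
  have hone : H 0 1 = 1 ∨ H 0 2 = 1 ∨ H 0 3 = 1 ∨ H 1 2 = 1 ∨ H 1 3 = 1 ∨ H 2 3 = 1 := by
    obtain ⟨u, v, huv, h1uv⟩ := hnotoriented
    have hvu : H v u = 1 := by rw [hsym v u, h1uv]; simp
    have pairs : ∀ u v : Fin 4, u ≠ v → (u=0∧v=1)∨(u=1∧v=0)∨(u=0∧v=2)∨(u=2∧v=0)∨(u=0∧v=3)∨(u=3∧v=0)∨(u=1∧v=2)∨(u=2∧v=1)∨(u=1∧v=3)∨(u=3∧v=1)∨(u=2∧v=3)∨(u=3∧v=2) := by decide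
    rcases pairs u v huv with ⟨rfl,rfl⟩|⟨rfl,rfl⟩|⟨rfl,rfl⟩|⟨rfl,rfl⟩|⟨rfl,rfl⟩|⟨rfl,rfl⟩|⟨rfl,rfl⟩|⟨rfl,rfl⟩|⟨rfl,rfl⟩|⟨rfl,rfl⟩|⟨rfl,rfl⟩|⟨rfl,rfl⟩ <;> tauto
  have := aux729 (H 0 1) (H 0 2) (H 0 3) (H 1 2) (H 1 3) (H 2 3)
    (mem 0 1 (by decide)) (mem 0 2 (by decide)) (mem 0 3 (by decide))
    (mem 1 2 (by decide)) (mem 1 3 (by decide)) (mem 2 3 (by decide))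
    h1 h2 h3 hone
  have vtr : ∀ w : Fin 4, ∀ v : Fin 4, v ≠ w → v ∈ ({0,1,2,3} : Set (Fin 4)) := by decide
  have vne : ∀ v : Fin 4, v ≠ 0 → v = 1 ∨ v = 2 ∨ v = 3 := by decide
  have vne1 : ∀ v : Fin 4, v ≠ 1 → v = 0 ∨ v = 2 ∨ v = 3 := by decide
  have vne2 : ∀ v : Fin 4, v ≠ 2 → v = 0 ∨ v = 1 ∨ v = 3 := by decide
  have vne3 : ∀ v : Fin 4, v ≠ 3 → v = 0 ∨ v = 1 ∨ v = 2 := by decide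
  rcases this with ⟨x, y, z⟩ | ⟨x, y, z⟩ | ⟨x, y, z⟩ | ⟨x, y, z⟩
  · refine ⟨0, fun v hv => ?_⟩
    rcases vne v hv with rfl|rfl|rfl <;> assumption
  · refine ⟨1, fun v hv => ?_⟩
    rcases vne1 v hv with rfl|rfl|rfl
    · rw [hsym]; simp [x]
    · exact y
    · exact z
  · refine ⟨2, fun v hv => ?_⟩
    rcases vne2 v hv with rfl|rfl|rfl
    · rw [hsym]; simp [x]
    · rw [hsym]; simp [y]
    · exact z
  · refine ⟨3, fun v hv => ?_⟩
    rcases vne3 v hv with rfl|rfl|rfl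
    · rw [hsym]; simp [x]
    · rw [hsym]; simp [y]
    · rw [hsym]; simp [z]
end

section
/- Define H_k recursively by H₁ = [[0,i],[-i,0]], H_k = [[H_{k-1}, iI],[-iI, -H_{k-1}]]. Suppose H is any 2^k × 2^k Hermitian matrix of the form [[H_{k-1}, S],[S*, -H_{k-1}]] with S diagonal, entries of S in {i,-i}, and H² = k·I. If moreover S₁₁ = i, then S = i·I, i.e., H = H_k. -/
open Matrix

/-!
The off-diagonal block of `H² = (m+1)·I` says that `S` commutes with `H_m`. A diagonal matrix
commuting with `A` has equal entries at `a` and `b` whenever `A a b ≠ 0`, and the nonzero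
pattern of `H_m` is the hypercube graph `Q_m`, which is connected. Hence `S` is scalar, and
`S₁₁ = i` pins the scalar.
-/

namespace Matrix

variable {n R : Type*}

theorem commute_of_fromBlocks_neg_mul_self_eq_smul_one [Fintype n] [DecidableEq n] [Ring R]
    {A B C : Matrix n n R} {c : R}
    (h : fromBlocks A B C (-A) * fromBlocks A B C (-A) = c • (1 : Matrix (n ⊕ n) (n ⊕ n) R)) :
    Commute A B := by
  rw [fromBlocks_multiply, ← fromBlocks_one, fromBlocks_smul, fromBlocks_inj] at h
  have hAB : A * B + B * -A = 0 := by simpa using h.2.1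
  rw [mul_neg, add_neg_eq_zero] at hAB
  exact hAB

theorem apply_eq_of_commute_diagonal [Fintype n] [DecidableEq n] [CommRing R] [NoZeroDivisors R]
    {A : Matrix n n R} {d : n → R} (h : Commute A (diagonal d)) {a b : n} (hab : A a b ≠ 0) :
    d a = d b := by
  have hentry : A a b * d b = d a * A a b := by
    simpa [mul_diagonal, diagonal_mul] using congrFun (congrFun h.eq a) b
  have : A a b * (d b - d a) = 0 := by linear_combination hentry
  exact (sub_eq_zero.mp ((mul_eq_zero.mp this).resolve_left hab)).symm

end Matrix

theorem Hcube_succ_apply (k : ℕ) (x y : Fin (2 ^ k) ⊕ Fin (2 ^ k)) :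
    Hcube (k + 1) (cubeEquiv k x) (cubeEquiv k y) =
      fromBlocks (Hcube k) (Complex.I • 1) (-(Complex.I • 1)) (-(Hcube k)) x y := by
  rw [Hcube, reindex_apply, submatrix_apply, Equiv.symm_apply_apply, Equiv.symm_apply_apply]

theorem Hcube_support_connected {α : Type*} (m : ℕ) (f : Fin (2 ^ m) → α)
    (hf : ∀ a b, Hcube m a b ≠ 0 → f a = f b) (a b : Fin (2 ^ m)) : f a = f b := by
  induction m with
  | zero => exact congrArg f (Subsingleton.elim (α := Fin 1) a b)
  | succ k ih =>
    have hstep : ∀ x y,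
        fromBlocks (Hcube k) (Complex.I • 1) (-(Complex.I • 1)) (-(Hcube k)) x y ≠ 0 →
          f (cubeEquiv k x) = f (cubeEquiv k y) := fun x y h =>
      hf _ _ (by rwa [Hcube_succ_apply])
    have hinl : ∀ p q, f (cubeEquiv k (.inl p)) = f (cubeEquiv k (.inl q)) :=
      ih _ fun p q h => hstep (.inl p) (.inl q) (by simpa using h)
    have hinr : ∀ p q, f (cubeEquiv k (.inr p)) = f (cubeEquiv k (.inr q)) :=
      ih _ fun p q h => hstep (.inr p) (.inr q) (by simpa using h)
    have hmatch : ∀ p, f (cubeEquiv k (.inl p)) = f (cubeEquiv k (.inr p)) :=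
      fun p => hstep (.inl p) (.inr p) (by simp [Complex.I_ne_zero])
    have hall : ∀ x y, f (cubeEquiv k x) = f (cubeEquiv k y) := by
      rintro (p | p) (q | q)
      · exact hinl p q
      · exact (hinl p q).trans (hmatch q)
      · exact (hinr p q).trans (hmatch q).symm
      · exact hinr p q
    simpa using hall ((cubeEquiv k).symm a) ((cubeEquiv k).symm b)

/-- Uniqueness step: if `H = [[H_{k-1}, S], [S*, -H_{k-1}]]` with `S` diagonal with
entries in `{i, -i}` satisfies `H² = k·I` (here `k = m+1`), and the first matching
entry is `S₁₁ = i`, then `S = i·I`, i.e. `H = H_k`. -/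
theorem matching_block_forced (m : ℕ)
    (S : Matrix (Fin (2 ^ m)) (Fin (2 ^ m)) ℂ)
    (hS : S.IsDiag)
    (hsq : (Matrix.fromBlocks (Hcube m) S Sᴴ (-(Hcube m))) *
        (Matrix.fromBlocks (Hcube m) S Sᴴ (-(Hcube m))) =
      ((m + 1 : ℕ) : ℂ) • (1 : Matrix (Fin (2 ^ m) ⊕ Fin (2 ^ m)) (Fin (2 ^ m) ⊕ Fin (2 ^ m)) ℂ))
    (h00 : S ⟨0, by positivity⟩ ⟨0, by positivity⟩ = Complex.I) :
    S = Complex.I • (1 : Matrix (Fin (2 ^ m)) (Fin (2 ^ m)) ℂ) := by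
  have hSdiag : diagonal S.diag = S := hS.diagonal_diag
  have hcomm : Commute (Hcube m) (diagonal S.diag) := by
    rw [hSdiag]
    exact commute_of_fromBlocks_neg_mul_self_eq_smul_one hsq
  have hconst : ∀ a, S.diag a = Complex.I := fun a =>
    (Hcube_support_connected m S.diag (fun _ _ => apply_eq_of_commute_diagonal hcomm) a _).trans
      h00
  rw [← hSdiag, smul_one_eq_diagonal]
  exact congrArg diagonal (funext hconst)
end

section
/- Every orientation of the hypercube Q_k whose Hermitian-adjacency matrix H satisfies H² = k·I is switching equivalent to the canonical orientation φ₀: there exists a diagonal matrix D with diagonal entries in {1,-1} such that D⁻¹ H D = H_k, where H_k is defined recursively by H₁ = [[0,i],[-i,0]], H_k = [[H_{k-1}, iI],[-iI, -H_{k-1}]]. -/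
open Matrix

set_option maxHeartbeats 1000000 in
lemma hcube_key : ∀ (k : ℕ) (H : Matrix (Fin (2 ^ k)) (Fin (2 ^ k)) ℂ), H.IsHermitian →
    (∀ u v, H u v ∈ ({0, Complex.I, -Complex.I} : Set ℂ)) →
    (∀ u v, H u v ≠ 0 ↔ Hcube k u v ≠ 0) →
    H ^ 2 = (k : ℂ) • 1 →
    ∃ D : Matrix (Fin (2 ^ k)) (Fin (2 ^ k)) ℂ, D.IsDiag ∧
      (∀ i, D i i = 1 ∨ D i i = -1) ∧ D⁻¹ * H * D = Hcube k := by
  intro k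
  induction k with
  | zero =>
      intro H hH hent hsupp hsq
      refine ⟨1, Matrix.isDiag_one, fun i => Or.inl (by simp), ?_⟩
      have hH0 : H = 0 := by
        ext u v
        by_contra h
        exact ((hsupp u v).mp h) (by simp [Hcube])
      simp [hH0, Hcube]
  | succ k ih =>
      intro H hH hent hsupp hsq
      set e := cubeEquiv k with he
      set H' : Matrix (Fin (2 ^ k) ⊕ Fin (2 ^ k)) (Fin (2 ^ k) ⊕ Fin (2 ^ k)) ℂ :=
        H.submatrix e e with hH'def
      set F : Matrix (Fin (2 ^ k) ⊕ Fin (2 ^ k)) (Fin (2 ^ k) ⊕ Fin (2 ^ k)) ℂ :=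
        Matrix.fromBlocks (Hcube k) (Complex.I • 1) (-(Complex.I • 1)) (-(Hcube k)) with hFdef
      have hHc : Hcube (k + 1) = F.submatrix ⇑(e.symm) ⇑(e.symm) := by
        simp [Hcube, Matrix.reindex_apply, he, hFdef]
      -- H' facts
      have hH' : H'ᴴ = H' := by
        rw [hH'def, Matrix.conjTranspose_submatrix, hH.eq]
      have hsupp' : ∀ a b, H' a b ≠ 0 ↔ F a b ≠ 0 := by
        intro a b
        have := hsupp (e a) (e b)
        rw [hHc] at this
        simpa [hH'def] using this
      have hsq' : H' * H' = ((k : ℂ) + 1) • 1 := by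
        have h1 : H * H = ((k : ℂ) + 1) • 1 := by
          rw [← pow_two, hsq, Nat.cast_add, Nat.cast_one]
        rw [hH'def, Matrix.submatrix_mul_equiv, h1]
        ext a b
        by_cases hab : a = b
        · subst hab; simp [Matrix.one_apply]
        · have : e a ≠ e b := fun h => hab (e.injective h)
          simp [Matrix.one_apply, hab, this]
      -- blocks
      set B := H'.toBlocks₁₁ with hB
      set C := H'.toBlocks₁₂ with hCdef
      set C₂ := H'.toBlocks₂₁ with hC₂def
      set B₂ := H'.toBlocks₂₂ with hB₂def
      have hblocks : H' = Matrix.fromBlocks B C C₂ B₂ := (Matrix.fromBlocks_toBlocks H').symm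
      have hC2 : C₂ = Cᴴ := by
        ext a b
        have := congrFun (congrFun hH' (Sum.inr a)) (Sum.inl b)
        simp only [Matrix.conjTranspose_apply] at this
        simpa [hC₂def, hCdef, Matrix.toBlocks₂₁, Matrix.toBlocks₁₂,
          Matrix.conjTranspose_apply] using this.symm
      -- C is diagonal with entries ±i
      set c : Fin (2 ^ k) → ℂ := fun j => C j j with hcdef
      have hCdiag : C = Matrix.diagonal c := by
        ext a b
        by_cases hab : a = b
        · subst hab; simp [hcdef]
        · have h0 : F (Sum.inl a) (Sum.inr b) = 0 := by
            simp [hFdef, Matrix.one_apply, hab]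
          have := hsupp' (Sum.inl a) (Sum.inr b)
          rw [h0] at this
          have hz : H' (Sum.inl a) (Sum.inr b) = 0 := by
            by_contra h
            exact (this.mp h) rfl
          simp [hCdef, Matrix.toBlocks₁₂, Matrix.diagonal_apply_ne _ hab, hz]
      have hc : ∀ j, c j = Complex.I ∨ c j = -Complex.I := by
        intro j
        have hnz : H' (Sum.inl j) (Sum.inr j) ≠ 0 := by
          rw [hsupp']
          simp [hFdef, Complex.I_ne_zero]
        have hmem := hent (e (Sum.inl j)) (e (Sum.inr j))
        have hval : c j = H (e (Sum.inl j)) (e (Sum.inr j)) := by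
          simp [hcdef, hCdef, Matrix.toBlocks₁₂, hH'def]
        rw [← hval] at hmem
        have hnz' : c j ≠ 0 := by rw [hval]; exact hnz
        rcases hmem with h | h | h
        · exact absurd h hnz'
        · exact Or.inl h
        · exact Or.inr h
      -- C * Cᴴ = 1 and Cᴴ * C = 1
      have hccs : ∀ j, c j * (starRingEnd ℂ) (c j) = 1 := by
        intro j
        rcases hc j with h | h <;> simp [h, Complex.conj_I]
      have hCCt : C * Cᴴ = 1 := by
        rw [hCdiag, Matrix.diagonal_conjTranspose, Matrix.diagonal_mul_diagonal]
        ext a b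
        by_cases hab : a = b
        · subst hab
          simpa using hccs a
        · rw [Matrix.diagonal_apply_ne _ hab, Matrix.one_apply_ne hab]
      have hCtC : Cᴴ * C = 1 := by
        rw [hCdiag, Matrix.diagonal_conjTranspose, Matrix.diagonal_mul_diagonal]
        ext a b
        by_cases hab : a = b
        · subst hab
          have := hccs a
          rw [mul_comm] at this
          simpa using this
        · rw [Matrix.diagonal_apply_ne _ hab, Matrix.one_apply_ne hab]
      -- block equations from H'^2
      have hsqblocks := hsq'
      rw [hblocks, hC2, Matrix.fromBlocks_multiply] at hsqblocks
      have hone : ((k : ℂ) + 1) • (1 : Matrix (Fin (2 ^ k) ⊕ Fin (2 ^ k)) (Fin (2 ^ k) ⊕ Fin (2 ^ k)) ℂ)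
          = Matrix.fromBlocks (((k : ℂ) + 1) • 1) 0 0 (((k : ℂ) + 1) • 1) := by
        rw [← Matrix.fromBlocks_one, Matrix.fromBlocks_smul]
        simp
      rw [hone, Matrix.fromBlocks_inj] at hsqblocks
      obtain ⟨E1, E2, -, -⟩ := hsqblocks
      -- B satisfies the inductive hypotheses
      have hBsq : B * B = (k : ℂ) • 1 := by
        rw [hCCt] at E1
        have h2 := eq_sub_of_add_eq E1
        rw [add_smul, one_smul, add_sub_cancel_right] at h2
        exact h2
      have hBh : Bᴴ = B := by
        ext a b
        have := congrFun (congrFun hH' (Sum.inl a)) (Sum.inl b)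
        simp only [Matrix.conjTranspose_apply] at this
        simpa [hB, Matrix.toBlocks₁₁, Matrix.conjTranspose_apply] using this
      have hBent : ∀ a b, B a b ∈ ({0, Complex.I, -Complex.I} : Set ℂ) := by
        intro a b
        have := hent (e (Sum.inl a)) (e (Sum.inl b))
        simpa [hB, Matrix.toBlocks₁₁, hH'def] using this
      have hBsupp : ∀ a b, B a b ≠ 0 ↔ Hcube k a b ≠ 0 := by
        intro a b
        have := hsupp' (Sum.inl a) (Sum.inl b)
        simpa [hB, Matrix.toBlocks₁₁, hFdef] using this
      obtain ⟨D₀, hD₀diag, hD₀pm, hD₀conj⟩ :=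
        ih B hBh hBent hBsupp (by rw [pow_two]; exact hBsq)
      set d : Fin (2 ^ k) → ℂ := fun j => D₀ j j with hddef
      have hD₀ : D₀ = Matrix.diagonal d := by
        ext a b
        by_cases hab : a = b
        · subst hab; simp [hddef]
        · rw [Matrix.diagonal_apply_ne _ hab, hD₀diag hab]
      have hd : ∀ j, d j = 1 ∨ d j = -1 := hD₀pm
      have hD₀sq : D₀ * D₀ = 1 := by
        rw [hD₀, Matrix.diagonal_mul_diagonal]
        ext a b
        by_cases hab : a = b
        · subst hab
          rcases hd a with h | h <;> simp [h]
        · rw [Matrix.diagonal_apply_ne _ hab, Matrix.one_apply_ne hab]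
      have hD₀inv : D₀⁻¹ = D₀ := Matrix.inv_eq_right_inv hD₀sq
      rw [hD₀inv] at hD₀conj
      -- the second diagonal block of D
      set f : Fin (2 ^ k) → ℂ := fun j => d j * Complex.I * (starRingEnd ℂ) (c j) with hfdef
      have hf : ∀ j, f j = 1 ∨ f j = -1 := by
        intro j
        rcases hd j with h | h <;> rcases hc j with h' | h' <;>
          simp [hfdef, h, h', Complex.conj_I]
      set D₁ : Matrix (Fin (2 ^ k)) (Fin (2 ^ k)) ℂ := Matrix.diagonal f with hD₁def
      have hD₁sq : D₁ * D₁ = 1 := by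
        rw [hD₁def, Matrix.diagonal_mul_diagonal]
        ext a b
        by_cases hab : a = b
        · subst hab
          rcases hf a with h | h <;> simp [h]
        · rw [Matrix.diagonal_apply_ne _ hab, Matrix.one_apply_ne hab]
      -- the key diagonal identities
      have hfc : ∀ j, f j * (starRingEnd ℂ) (c j) = -Complex.I * d j := by
        intro j
        rcases hd j with h | h <;> rcases hc j with h' | h' <;>
          simp [hfdef, h, h', Complex.conj_I]
      have hcf : ∀ j, c j * f j = Complex.I * d j := by
        intro j
        rcases hd j with h | h <;> rcases hc j with h' | h' <;>
          simp [hfdef, h, h', Complex.conj_I]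
      have hCD₁ : C * D₁ = Complex.I • D₀ := by
        rw [hCdiag, hD₁def, Matrix.diagonal_mul_diagonal, hD₀]
        ext a b
        by_cases hab : a = b
        · subst hab
          simpa using hcf a
        · simp [Matrix.diagonal_apply_ne _ hab]
      have hD₁Ct : D₁ * Cᴴ = (-Complex.I) • D₀ := by
        rw [hCdiag, Matrix.diagonal_conjTranspose, hD₁def, Matrix.diagonal_mul_diagonal, hD₀]
        ext a b
        by_cases hab : a = b
        · subst hab
          simpa [neg_mul] using hfc a
        · simp [Matrix.diagonal_apply_ne _ hab]
      -- the three off-diagonal/second blocks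
      have h12 : D₀ * C * D₁ = Complex.I • 1 := by
        rw [Matrix.mul_assoc, hCD₁, Matrix.mul_smul, hD₀sq]
      have h21 : D₁ * Cᴴ * D₀ = -(Complex.I • 1) := by
        rw [hD₁Ct, Matrix.smul_mul, hD₀sq, neg_smul]
      have hB₂eq : B₂ = -(Cᴴ * B * C) := by
        have h1 : C * B₂ = -(B * C) :=
          eq_neg_of_add_eq_zero_left (by rw [add_comm]; exact E2)
        calc B₂ = (Cᴴ * C) * B₂ := by rw [hCtC, Matrix.one_mul]
          _ = Cᴴ * (C * B₂) := by rw [Matrix.mul_assoc]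
          _ = Cᴴ * (-(B * C)) := by rw [h1]
          _ = -(Cᴴ * B * C) := by rw [Matrix.mul_neg, Matrix.mul_assoc]
      have h22 : D₁ * B₂ * D₁ = -(Hcube k) := by
        rw [hB₂eq]
        have hassoc : D₁ * -(Cᴴ * B * C) * D₁ = -((D₁ * Cᴴ) * B * (C * D₁)) := by
          simp only [Matrix.mul_neg, Matrix.neg_mul, Matrix.mul_assoc]
        rw [hassoc, hD₁Ct, hCD₁, Matrix.smul_mul, Matrix.smul_mul, Matrix.mul_smul,
          smul_smul, hD₀conj]
        simp [Complex.I_mul_I]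
      -- assemble D
      set D' : Matrix (Fin (2 ^ k) ⊕ Fin (2 ^ k)) (Fin (2 ^ k) ⊕ Fin (2 ^ k)) ℂ :=
        Matrix.fromBlocks D₀ 0 0 D₁ with hD'def
      have hD'H' : D' * H' * D' = F := by
        rw [hblocks, hC2, hD'def, hFdef, Matrix.fromBlocks_multiply, Matrix.fromBlocks_multiply]
        simp only [Matrix.zero_mul, Matrix.mul_zero, add_zero, zero_add]
        rw [Matrix.fromBlocks_inj]
        exact ⟨hD₀conj, h12, h21, h22⟩
      have hD'sq : D' * D' = 1 := by
        rw [hD'def, Matrix.fromBlocks_multiply]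
        simp only [Matrix.zero_mul, Matrix.mul_zero, add_zero, zero_add, hD₀sq, hD₁sq]
        exact Matrix.fromBlocks_one
      set D : Matrix (Fin (2 ^ (k + 1))) (Fin (2 ^ (k + 1))) ℂ :=
        D'.submatrix ⇑(e.symm) ⇑(e.symm) with hDdef
      have hHsub : H = H'.submatrix ⇑(e.symm) ⇑(e.symm) := by
        ext u v
        simp [hH'def]
      have hDsq : D * D = 1 := by
        rw [hDdef, Matrix.submatrix_mul_equiv, hD'sq, Matrix.submatrix_one_equiv]
      have hDinv : D⁻¹ = D := Matrix.inv_eq_right_inv hDsq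
      refine ⟨D, ?_, ?_, ?_⟩
      · intro u v huv
        have hne : e.symm u ≠ e.symm v := fun h => huv (e.symm.injective h)
        exact (Matrix.IsDiag.fromBlocks hD₀diag (Matrix.isDiag_diagonal f)) hne
      · intro u
        rw [hDdef]
        rcases hsu : e.symm u with a | a
        · simpa [hD'def, hsu] using hD₀pm a
        · simpa [hD'def, hsu, hD₁def] using hf a
      · rw [hDinv, hDdef, hHsub, Matrix.submatrix_mul_equiv, Matrix.submatrix_mul_equiv,
          hD'H', hHc]

/-- Uniqueness of the optimum orientation of the hypercube: every orientation of `Q_k`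
(a Hermitian matrix with entries in `{0, i, -i}` whose support is the adjacency pattern
of `Q_k`, here given by `Hcube k`) satisfying `H² = k·I` is switching equivalent to the
canonical orientation: there is a diagonal ±1 matrix `D` with `D⁻¹ H D = H_k`. -/
theorem optimum_orientation_unique (k : ℕ) (hk : 1 ≤ k)
    (H : Matrix (Fin (2 ^ k)) (Fin (2 ^ k)) ℂ) (hH : H.IsHermitian)
    (hent : ∀ u v, H u v ∈ ({0, Complex.I, -Complex.I} : Set ℂ))
    (hsupp : ∀ u v, H u v ≠ 0 ↔ Hcube k u v ≠ 0)
    (hsq : H ^ 2 = (k : ℂ) • (1 : Matrix (Fin (2 ^ k)) (Fin (2 ^ k)) ℂ)) :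
    ∃ D : Matrix (Fin (2 ^ k)) (Fin (2 ^ k)) ℂ, D.IsDiag ∧
      (∀ i, D i i = 1 ∨ D i i = -1) ∧ D⁻¹ * H * D = Hcube k :=
  hcube_key k H hH hent hsupp hsq
end

section
/- Let G^φ be a 3-regular connected mixed graph whose Hermitian-adjacency matrix H satisfies H² = 3I. Then the underlying graph G is isomorphic to either the complete graph K₄ or the 3-dimensional hypercube Q₃. -/
/-!
For `u ≠ v` the entry `(H * H) u v = ∑ w, H u w * H w v` vanishes. Its nonzero terms are
indexed by the common neighbours of `u` and `v` and are fourth roots of unity, whose `re + im`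
is `±1`; so any two distinct vertices have an even number of common neighbours, that is 0 or 2
in a cubic graph. A triangle then forces a fourth vertex adjacent to all three, while in a
triangle-free graph the pairs of neighbours of a vertex force the eight vertices of a cube.
Either configuration is an induced copy of a 3-regular graph inside the connected 3-regular
graph `G`, and such a copy is all of `G`.
-/

open Matrix Finset

/-- The hypercube graph `Q_m`: vertices `{0,1}^m`, adjacent iff they differ in exactly
one coordinate. -/
def hypercubeGraph (m : ℕ) : SimpleGraph (Fin m → ZMod 2) where
  Adj u v := (Finset.univ.filter (fun i => u i ≠ v i)).card = 1
  symm := by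
    constructor
    intro u v h
    simpa [ne_comm] using h
  loopless := by
    constructor
    intro u h
    simp at h

instance (m : ℕ) : DecidableRel (hypercubeGraph m).Adj := fun _ _ =>
  inferInstanceAs (Decidable (_ = 1))

theorem hypercubeGraph_three_isRegularOfDegree : (hypercubeGraph 3).IsRegularOfDegree 3 := by
  unfold SimpleGraph.IsRegularOfDegree
  decide

theorem hypercubeGraph_three_neighborSet_injective :
    Function.Injective (hypercubeGraph 3).neighborSet := by
  have key : ∀ s t : Fin 3 → ZMod 2,
      (∀ u, (hypercubeGraph 3).Adj s u ↔ (hypercubeGraph 3).Adj t u) → s = t := by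
    decide
  exact fun s t h => key s t fun u => Set.ext_iff.1 h u

theorem even_card_of_sum_eq_zero {ι R : Type*} [Ring R] [CharZero R] {s : Finset ι}
    {f : ι → R} (hf : ∀ i ∈ s, f i = 1 ∨ f i = -1) (hsum : ∑ i ∈ s, f i = 0) : Even #s := by
  classical
  have hshift : ∀ i ∈ s, f i + 1 = 2 * if f i = 1 then 1 else 0 := by
    intro i hi
    rcases hf i hi with h | h <;> norm_num [h]
  have hcard : (#s : R) = #(s.filter (f · = 1)) + #(s.filter (f · = 1)) := by
    calc (#s : R) = ∑ i ∈ s, (f i + 1) := by simp [sum_add_distrib, hsum]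
      _ = _ := by rw [sum_congr rfl hshift, ← mul_sum, sum_boole, two_mul]
  exact ⟨_, by exact_mod_cast hcard⟩

theorem Complex.re_add_im_mul_eq_one_or_neg_one {z w : ℂ}
    (hz : z ∈ ({1, -1, I, -I} : Set ℂ)) (hw : w ∈ ({1, -1, I, -I} : Set ℂ)) :
    (z * w).re + (z * w).im = 1 ∨ (z * w).re + (z * w).im = -1 := by
  rcases hz with rfl | rfl | rfl | rfl <;> rcases hw with rfl | rfl | rfl | rfl <;> norm_num

namespace SimpleGraph

variable {V : Type*} {G : SimpleGraph V}

theorem CliqueFree.not_adj_of_adj_of_adj (hG : G.CliqueFree 3) {p q r : V}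
    (hpr : G.Adj p r) (hqr : G.Adj q r) : ¬G.Adj p q := by
  classical
  exact fun hpq => hG {p, q, r} (is3Clique_triple_iff.2 ⟨hpq, hpr, hqr⟩)

theorem Embedding.surjective_of_isRegularOfDegree [Fintype V] [DecidableRel G.Adj]
    {W : Type*} [Fintype W] [Nonempty W] {H : SimpleGraph W} [DecidableRel H.Adj] {k : ℕ}
    (f : H ↪g G) (hH : H.IsRegularOfDegree k) (hG : G.IsRegularOfDegree k)
    (hconn : G.Connected) : Function.Surjective f := by
  classical
  have hnbr (s : W) : G.neighborFinset (f s) = (H.neighborFinset s).map f.toEmbedding := by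
    refine (eq_of_subset_of_card_le (fun v hv => ?_) ?_).symm
    · obtain ⟨t, ht, rfl⟩ := mem_map.1 hv
      simpa using ht
    · simp [hH.degree_eq, hG.degree_eq]
  have hclosed {v v' : V} (hvv' : G.Adj v v') (hv : v ∈ Set.range f) : v' ∈ Set.range f := by
    obtain ⟨s, rfl⟩ := hv
    have hv' : v' ∈ G.neighborFinset (f s) := (G.mem_neighborFinset _ _).2 hvv'
    rw [hnbr] at hv'
    obtain ⟨t, -, rfl⟩ := mem_map.1 hv'
    exact ⟨t, rfl⟩
  have hwalk {v v' : V} (p : G.Walk v v') : v ∈ Set.range f → v' ∈ Set.range f := by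
    induction p with
    | nil => exact id
    | cons hadj _ ih => exact fun hv => ih (hclosed hadj hv)
  obtain ⟨s⟩ := ‹Nonempty W›
  exact fun v => hwalk (hconn (f s) v).some ⟨s, rfl⟩

theorem nonempty_iso_of_adj_iff [Fintype V] [DecidableRel G.Adj] {W : Type*} [Fintype W]
    [Nonempty W] {H : SimpleGraph W} [DecidableRel H.Adj] {k : ℕ}
    (hH : H.IsRegularOfDegree k) (hG : G.IsRegularOfDegree k) (hconn : G.Connected)
    (htwin : Function.Injective H.neighborSet) (f : W → V)
    (hf : ∀ s t, G.Adj (f s) (f t) ↔ H.Adj s t) : Nonempty (G ≃g H) := by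
  have hinj : Function.Injective f := fun s t hst =>
    htwin <| Set.ext fun u => by simp only [mem_neighborSet, ← hf, hst]
  let e : H ↪g G := ⟨⟨f, hinj⟩, hf _ _⟩
  exact ⟨(RelIso.ofSurjective e (e.surjective_of_isRegularOfDegree hH hG hconn)).symm⟩

variable [Fintype V] [DecidableRel G.Adj]

theorem IsRegularOfDegree.exists_adj_ne_ne {k : ℕ} (hG : G.IsRegularOfDegree k) (hk : 2 < k)
    (u p q : V) : ∃ r, G.Adj u r ∧ r ≠ p ∧ r ≠ q := by
  classical
  have hcard : 0 < #(G.neighborFinset u \ {p, q}) := by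
    have hsdiff := le_card_sdiff {p, q} (G.neighborFinset u)
    rw [card_neighborFinset_eq_degree, hG.degree_eq] at hsdiff
    have := card_le_two (a := p) (b := q)
    omega
  obtain ⟨r, hr⟩ := card_pos.1 hcard
  simp only [mem_sdiff, mem_neighborFinset, mem_insert, mem_singleton, not_or] at hr
  exact ⟨r, hr.1, hr.2⟩

theorem IsRegularOfDegree.eq_or_eq_or_eq_of_adj [DecidableEq V] (hG : G.IsRegularOfDegree 3)
    {u p q r : V} (hp : G.Adj u p) (hq : G.Adj u q) (hr : G.Adj u r)
    (hpq : p ≠ q) (hpr : p ≠ r) (hqr : q ≠ r) : ∀ ⦃s⦄, G.Adj u s → s = p ∨ s = q ∨ s = r := by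
  have hN : {p, q, r} = G.neighborFinset u := by
    refine eq_of_subset_of_card_le (by simp [insert_subset_iff, hp, hq, hr]) ?_
    rw [card_neighborFinset_eq_degree, hG.degree_eq, card_eq_three.2 ⟨p, q, r, hpq, hpr, hqr, rfl⟩]
  intro s hs
  simpa [← hN] using (G.mem_neighborFinset u s).2 hs

theorem nonempty_iso_hypercubeGraph_of_adj (hreg : G.IsRegularOfDegree 3) (hconn : G.Connected)
    (hcf : G.CliqueFree 3) {v₀ a b c x y z w : V}
    (hv₀a : G.Adj v₀ a) (hv₀b : G.Adj v₀ b) (hv₀c : G.Adj v₀ c) (hax : G.Adj a x)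
    (hbx : G.Adj b x) (hay : G.Adj a y) (hcy : G.Adj c y) (hbz : G.Adj b z) (hcz : G.Adj c z)
    (hxw : G.Adj x w) (hyw : G.Adj y w) (hzw : G.Adj z w)
    (hv₀w : ¬G.Adj v₀ w) (haz : ¬G.Adj a z) (hby : ¬G.Adj b y) (hcx : ¬G.Adj c x) :
    Nonempty (G ≃g hypercubeGraph 3) := by
  -- `v₀, a, b, c, x, y, z, w` become the cube vertices `000, 100, 010, 001, 110, 101, 011, 111`
  refine nonempty_iso_of_adj_iff hypercubeGraph_three_isRegularOfDegree hreg hconn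
    hypercubeGraph_three_neighborSet_injective
    (fun s => ![![![v₀, c], ![b, z]], ![![a, y], ![x, w]]] (s 0) (s 1) (s 2)) fun s t => ?_
  fin_cases s <;> fin_cases t
  all_goals first
    | refine iff_of_true ?_ (by decide)
    | refine iff_of_false ?_ (by decide)
  all_goals first
    | assumption
    | exact G.irrefl
    | exact Adj.symm ‹_›
    | exact fun h => ‹¬G.Adj _ _› h.symm
    -- the other non-adjacent pairs have a common neighbour, so an edge would close a triangle
    | solve_by_elim only [hcf.not_adj_of_adj_of_adj, Adj.symm, *]

variable [DecidableEq V]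

variable (G) in
def HasEvenCommonNeighbors : Prop :=
  ∀ ⦃u v : V⦄, u ≠ v → Even #(G.neighborFinset u ∩ G.neighborFinset v)

theorem hasEvenCommonNeighbors_of_mul_apply_eq_zero {H : Matrix V V ℂ}
    (hadj : ∀ u v, G.Adj u v → H u v ∈ ({1, -1, Complex.I, -Complex.I} : Set ℂ))
    (hnadj : ∀ u v, ¬G.Adj u v → H u v = 0) (hsq : ∀ u v, u ≠ v → (H * H) u v = 0) :
    G.HasEvenCommonNeighbors := by
  intro u v huv
  have hsum : ∑ w ∈ G.neighborFinset u ∩ G.neighborFinset v, H u w * H w v = 0 := by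
    rw [← hsq u v huv, mul_apply]
    refine sum_subset (subset_univ _) fun w _ hw => ?_
    simp only [mem_inter, mem_neighborFinset, not_and_or] at hw
    rcases hw with hw | hw
    · rw [hnadj u w hw, zero_mul]
    · rw [hnadj w v (fun h => hw h.symm), mul_zero]
  refine even_card_of_sum_eq_zero (f := fun w => (H u w * H w v).re + (H u w * H w v).im)
    (fun w hw => ?_) ?_
  · simp only [mem_inter, mem_neighborFinset] at hw
    exact Complex.re_add_im_mul_eq_one_or_neg_one (hadj _ _ hw.1) (hadj _ _ hw.2.symm)
  · rw [sum_add_distrib, ← Complex.re_sum, ← Complex.im_sum, hsum]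
    simp

namespace HasEvenCommonNeighbors

theorem exists_adj_adj_ne (hG : G.HasEvenCommonNeighbors) {u v w : V} (huv : u ≠ v)
    (huw : G.Adj u w) (hvw : G.Adj v w) : ∃ x, x ≠ w ∧ G.Adj u x ∧ G.Adj v x := by
  have hw : w ∈ G.neighborFinset u ∩ G.neighborFinset v := by simp [huw, hvw]
  have htwo : 1 < #(G.neighborFinset u ∩ G.neighborFinset v) := by
    obtain ⟨k, hk⟩ := hG huv
    have := card_pos.2 ⟨w, hw⟩
    omega
  obtain ⟨x, hx, hxw⟩ := exists_mem_ne htwo w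
  simp only [mem_inter, mem_neighborFinset] at hx
  exact ⟨x, hxw, hx⟩

theorem eq_of_adj_of_adj_of_adj (hG : G.HasEvenCommonNeighbors) (hreg : G.IsRegularOfDegree 3)
    {u v p q r : V} (hpq : p ≠ q) (hpr : p ≠ r) (hqr : q ≠ r)
    (hup : G.Adj u p) (huq : G.Adj u q) (hur : G.Adj u r)
    (hvp : G.Adj v p) (hvq : G.Adj v q) (hvr : G.Adj v r) : u = v := by
  by_contra huv
  have hle : #(G.neighborFinset u ∩ G.neighborFinset v) ≤ 3 := by
    rw [← hreg.degree_eq u, ← card_neighborFinset_eq_degree]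
    exact card_le_card inter_subset_left
  have hge : 3 ≤ #(G.neighborFinset u ∩ G.neighborFinset v) := by
    rw [← card_eq_three.2 ⟨p, q, r, hpq, hpr, hqr, rfl⟩]
    exact card_le_card (by simp [insert_subset_iff, *])
  obtain ⟨k, hk⟩ := hG huv
  omega

theorem exists_adj_of_adj_of_adj_of_adj (hG : G.HasEvenCommonNeighbors)
    (hreg : G.IsRegularOfDegree 3) {u v w : V} (huv : G.Adj u v) (huw : G.Adj u w)
    (hvw : G.Adj v w) : ∃ x, x ≠ w ∧ G.Adj u x ∧ G.Adj v x ∧ G.Adj w x := by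
  obtain ⟨x, hxw, hux, hvx⟩ := hG.exists_adj_adj_ne huv.ne huw hvw
  refine ⟨x, hxw, hux, hvx, ?_⟩
  -- `u` and `w` share `v`, hence a second neighbour, which can only be `x`
  obtain ⟨t, htv, hut, hwt⟩ := hG.exists_adj_adj_ne huw.ne huv hvw.symm
  rcases hreg.eq_or_eq_or_eq_of_adj huv huw hux hvw.ne hvx.ne hxw.symm hut with rfl | rfl | rfl
  · exact absurd rfl htv
  · exact absurd hwt G.irrefl
  · exact hwt

theorem nonempty_iso_completeGraph_of_adj (hG : G.HasEvenCommonNeighbors)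
    (hreg : G.IsRegularOfDegree 3) (hconn : G.Connected) {u v w : V} (huv : G.Adj u v)
    (huw : G.Adj u w) (hvw : G.Adj v w) : Nonempty (G ≃g (⊤ : SimpleGraph (Fin 4))) := by
  obtain ⟨x, hxw, hux, hvx, hwx⟩ := hG.exists_adj_of_adj_of_adj_of_adj hreg huv huw hvw
  refine nonempty_iso_of_adj_iff (fun _ => by simp) hreg hconn
    (fun s t h => by simpa using h) ![u, v, w, x] fun i j => ?_
  fin_cases i <;> fin_cases j
  all_goals first
    | refine iff_of_true ?_ (by decide)
    | refine iff_of_false ?_ (by decide)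
  all_goals first
    | assumption
    | exact G.irrefl
    | exact Adj.symm ‹_›

theorem nonempty_iso_hypercubeGraph (hG : G.HasEvenCommonNeighbors)
    (hreg : G.IsRegularOfDegree 3) (hconn : G.Connected) (hcf : G.CliqueFree 3) :
    Nonempty (G ≃g hypercubeGraph 3) := by
  obtain ⟨v₀⟩ := hconn.nonempty
  obtain ⟨a, b, c, hab, hac, hbc, hN⟩ := card_eq_three.1 (hreg.degree_eq v₀)
  have hv₀ (t : V) (ht : t ∈ ({a, b, c} : Finset V)) : G.Adj v₀ t := by
    rwa [← hN, mem_neighborFinset] at ht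
  have hv₀a := hv₀ a (by simp)
  have hv₀b := hv₀ b (by simp)
  have hv₀c := hv₀ c (by simp)
  obtain ⟨x, hxv₀, hax, hbx⟩ := hG.exists_adj_adj_ne hab hv₀a.symm hv₀b.symm
  obtain ⟨y, hyv₀, hay, hcy⟩ := hG.exists_adj_adj_ne hac hv₀a.symm hv₀c.symm
  obtain ⟨z, hzv₀, hbz, hcz⟩ := hG.exists_adj_adj_ne hbc hv₀b.symm hv₀c.symm
  have hunique (t : V) (hat : G.Adj a t) (hbt : G.Adj b t) (hct : G.Adj c t) : t = v₀ :=
    hG.eq_of_adj_of_adj_of_adj hreg hab hac hbc hat.symm hbt.symm hct.symm hv₀a hv₀b hv₀c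
  have hcx : ¬G.Adj c x := fun h => hxv₀ (hunique x hax hbx h)
  have hby : ¬G.Adj b y := fun h => hyv₀ (hunique y hay h hcy)
  have haz : ¬G.Adj a z := fun h => hzv₀ (hunique z h hbz hcz)
  obtain ⟨w, hxw, hwa, hwb⟩ := hreg.exists_adj_ne_ne (by norm_num) x a b
  have hx := hreg.eq_or_eq_or_eq_of_adj hax.symm hbx.symm hxw hab (Ne.symm hwa) (Ne.symm hwb)
  have hyw : G.Adj y w := by
    have hxy : x ≠ y := fun h => hcx (h ▸ hcy)
    obtain ⟨t, hta, hxt, hyt⟩ := hG.exists_adj_adj_ne hxy hax.symm hay.symm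
    rcases hx hxt with rfl | rfl | rfl
    · exact absurd rfl hta
    · exact absurd hyt.symm hby
    · exact hyt
  have hzw : G.Adj z w := by
    have hxz : x ≠ z := fun h => hcx (h ▸ hcz)
    obtain ⟨t, htb, hxt, hzt⟩ := hG.exists_adj_adj_ne hxz hbx.symm hbz.symm
    rcases hx hxt with rfl | rfl | rfl
    · exact absurd hzt.symm haz
    · exact absurd rfl htb
    · exact hzt
  have hv₀w : ¬G.Adj v₀ w := fun h =>
    hxv₀ (hG.eq_of_adj_of_adj_of_adj hreg hab hwa.symm hwb.symm hax.symm hbx.symm hxw hv₀a hv₀b h)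
  exact nonempty_iso_hypercubeGraph_of_adj hreg hconn hcf hv₀a hv₀b hv₀c hax hbx hay hcy hbz hcz
    hxw hyw hzw hv₀w haz hby hcx

end HasEvenCommonNeighbors

end SimpleGraph

theorem underlying_graph_K4_or_Q3_general {V : Type*} [Fintype V] [DecidableEq V]
    (G : SimpleGraph V) [DecidableRel G.Adj]
    (hreg : ∀ v : V, G.degree v = 3) (hconn : G.Connected)
    (H : Matrix V V ℂ)
    (hadj : ∀ u v, G.Adj u v → H u v ∈ ({1, Complex.I, -Complex.I} : Set ℂ))
    (hnadj : ∀ u v, ¬ G.Adj u v → H u v = 0)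
    (hsq : H ^ 2 = (3 : ℂ) • (1 : Matrix V V ℂ)) :
    Nonempty (G ≃g SimpleGraph.completeGraph (Fin 4)) ∨ Nonempty (G ≃g hypercubeGraph 3) := by
  have hG : G.HasEvenCommonNeighbors :=
    SimpleGraph.hasEvenCommonNeighbors_of_mul_apply_eq_zero
      (fun u v h => Set.insert_subset_insert (Set.subset_insert _ _) (hadj u v h)) hnadj
      fun u v huv => by simpa [sq, huv] using congr_fun₂ hsq u v
  by_cases hcf : G.CliqueFree 3
  · exact Or.inr (hG.nonempty_iso_hypercubeGraph hreg hconn hcf)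
  · obtain ⟨s, hs⟩ := not_forall.1 hcf
    obtain ⟨u, v, w, huv, huw, hvw, -⟩ := SimpleGraph.is3Clique_iff.1 (not_not.1 hs)
    exact Or.inl (hG.nonempty_iso_completeGraph_of_adj hreg hconn huv huw hvw)

/-- If `G^φ` is a 3-regular connected mixed graph whose Hermitian-adjacency matrix `H`
satisfies `H² = 3I`, then the underlying graph `G` is isomorphic to `K₄` or to the
hypercube `Q₃`. -/
theorem underlying_graph_K4_or_Q3 {V : Type*} [Fintype V] [DecidableEq V]
    (G : SimpleGraph V) [DecidableRel G.Adj]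
    (hreg : ∀ v : V, G.degree v = 3) (hconn : G.Connected)
    (H : Matrix V V ℂ) (hH : H.IsHermitian)
    (hadj : ∀ u v, G.Adj u v → H u v ∈ ({1, Complex.I, -Complex.I} : Set ℂ))
    (hnadj : ∀ u v, ¬ G.Adj u v → H u v = 0)
    (hsq : H ^ 2 = (3 : ℂ) • (1 : Matrix V V ℂ)) :
    Nonempty (G ≃g SimpleGraph.completeGraph (Fin 4)) ∨ Nonempty (G ≃g hypercubeGraph 3) :=
  underlying_graph_K4_or_Q3_general G hreg hconn H hadj hnadj hsq
end
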